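/- Define W(y) = ∫_{-1/2}^{1/2} dx / (Λ(y-x,x)² + Ω(y-x,x)²) where Λ(k,ℓ) = 4[sin²(πk)+sin²(πℓ)] and Ω(k,ℓ) = 2[sin(2πk)+sin(2πℓ)]. Then there is a constant C such that W(y) ≤ C|y|^{-3/2} for all y ∈ [-1/2, 1/2] \ {0}. -/

import Mathlib

open Real MeasureTheory

noncomputable def Lam (k l : ℝ) : ℝ := 4 * (Real.sin (π * k) ^ 2 + Real.sin (π * l) ^ 2)

noncomputable def Om (k l : ℝ) : ℝ := 2 * (Real.sin (2 * π * k) + Real.sin (2 * π * l))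

/-!
Writing `m = k + l` and `d = k - l`, one has `Ω(k,l) = 4 sin(πm) cos(πd)` and
`Λ(k,l) ≥ max(4 sin²(πl), 2 sin²(πd))`. If `cos²(πd)` is small then `sin²(πd)` is not, so in
either case `Λ² + Ω² ≳ l⁴ + m²`. For `k = y - x`, `l = x` this gives
`W(y) ≲ ∫ dx / (x⁴ + y²) ≲ |y|⁻¹ ∫ dx / (x² + |y|) ≤ π |y|^{-3/2}`.
-/

lemma four_mul_sq_le_sin_pi_mul_sq {t : ℝ} (ht : |t| ≤ 1 / 2) : 4 * t ^ 2 ≤ sin (π * t) ^ 2 := by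
  have hπt : |π * t| ≤ π / 2 := by
    rw [abs_mul, abs_of_pos pi_pos]; nlinarith [pi_pos]
  have h := mul_abs_le_abs_sin hπt
  rw [abs_mul, abs_of_pos pi_pos, ← mul_assoc, div_mul_cancel₀ _ pi_ne_zero] at h
  nlinarith [sq_abs t, sq_abs (sin (π * t)), abs_nonneg t]

lemma sin_sub_sq_le (a b : ℝ) : sin (a - b) ^ 2 ≤ 2 * (sin a ^ 2 + sin b ^ 2) := by
  rw [sin_sub]
  nlinarith [sq_nonneg (sin a * cos b + cos a * sin b), cos_sq_le_one a, cos_sq_le_one b,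
    sq_nonneg (sin a), sq_nonneg (sin b)]

lemma Om_eq (k l : ℝ) : Om k l = 4 * sin (π * (k + l)) * cos (π * (k - l)) := by
  rw [Om, show 2 * π * k = π * (k + l) + π * (k - l) by ring,
    show 2 * π * l = π * (k + l) - π * (k - l) by ring, sin_add, sin_sub]
  ring

lemma two_mul_sin_sub_sq_le_Lam (k l : ℝ) : 2 * sin (π * (k - l)) ^ 2 ≤ Lam k l := by
  rw [Lam, mul_sub]
  linarith [sin_sub_sq_le (π * k) (π * l)]

lemma sixteen_mul_sq_le_Lam (k : ℝ) {l : ℝ} (hl : |l| ≤ 1 / 2) : 16 * l ^ 2 ≤ Lam k l := by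
  rw [Lam]
  nlinarith [four_mul_sq_le_sin_pi_mul_sq hl, sq_nonneg (sin (π * k))]

lemma pow_four_add_sq_le_Lam_sq_add_Om_sq {k l : ℝ} (hl : |l| ≤ 1 / 2) (hkl : |k + l| ≤ 1 / 2) :
    l ^ 4 + (k + l) ^ 2 ≤ Lam k l ^ 2 + Om k l ^ 2 := by
  set S := sin (π * (k + l)) ^ 2
  set s := sin (π * (k - l)) ^ 2
  have hS : 4 * (k + l) ^ 2 ≤ S := four_mul_sq_le_sin_pi_mul_sq hkl
  have hS1 : S ≤ 1 := sin_sq_le_one _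
  have hs : 0 ≤ s := sq_nonneg _
  have hΩ : Om k l ^ 2 = 16 * S * (1 - s) := by
    rw [Om_eq, ← sin_sq_add_cos_sq (π * (k - l))]; ring
  have hΛl := sixteen_mul_sq_le_Lam k hl
  have hΛd := two_mul_sin_sub_sq_le_Lam k l
  -- `2s² + 16S(1 - s) ≥ 2S(s² - s + 1) ≥ 3S/2`, as `S ≤ 1`.
  have hSd : 3 / 2 * S ≤ 2 * s ^ 2 + 16 * S * (1 - s) := by
    nlinarith [sq_nonneg (s - 1 / 2), mul_nonneg (sub_nonneg.2 hS1) (sq_nonneg s)]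
  nlinarith [sq_nonneg (l ^ 2), mul_le_mul hΛl hΛl (by positivity) (by linarith),
    mul_le_mul hΛd hΛd (by positivity) (by linarith)]

lemma integral_one_div_sq_add_sq (a b : ℝ) {c : ℝ} (hc : c ≠ 0) :
    ∫ x in a..b, 1 / (x ^ 2 + c ^ 2) = (arctan (b / c) - arctan (a / c)) / c := by
  have h : ∀ x : ℝ, 1 / (x ^ 2 + c ^ 2) = (c ^ 2)⁻¹ * (1 / (1 + (x / c) ^ 2)) := fun x => by
    field_simp
    ring
  simp_rw [h, intervalIntegral.integral_const_mul,
    intervalIntegral.integral_comp_div (fun u => 1 / (1 + u ^ 2)) hc,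
    integral_one_div_one_add_sq, smul_eq_mul]
  field_simp

lemma integral_one_div_sq_add_sq_le (a b : ℝ) {c : ℝ} (hc : 0 < c) :
    ∫ x in a..b, 1 / (x ^ 2 + c ^ 2) ≤ π / c := by
  rw [integral_one_div_sq_add_sq a b hc.ne']
  gcongr
  linarith [arctan_lt_pi_div_two (b / c), neg_pi_div_two_lt_arctan (a / c)]

lemma integral_one_div_pow_four_add_sq_le {a b y : ℝ} (hab : a ≤ b) (hy : y ≠ 0) :
    ∫ x in a..b, 1 / (x ^ 4 + y ^ 2) ≤ 2 * π / |y| ^ ((3 : ℝ) / 2) := by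
  have hy' : 0 < |y| := abs_pos.2 hy
  set c := √|y|
  have hc : 0 < c := sqrt_pos.2 hy'
  have hc2 : c ^ 2 = |y| := sq_sqrt hy'.le
  have hpow : |y| ^ ((3 : ℝ) / 2) = |y| * c := by
    rw [show (3 : ℝ) / 2 = 1 + 1 / 2 by norm_num, rpow_add hy', rpow_one, ← sqrt_eq_rpow]
  -- `2 (x⁴ + y²) ≥ |y| (x² + |y|)`, since `2x⁴ + y² ≥ |y| x²`.
  have hpt : ∀ x : ℝ, 1 / (x ^ 4 + y ^ 2) ≤ 2 / |y| * (1 / (x ^ 2 + c ^ 2)) := fun x => by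
    rw [hc2, div_mul_div_comm, mul_one, div_le_div_iff₀ (by positivity) (by positivity),
      ← sq_abs y]
    nlinarith [sq_nonneg (x ^ 2 - |y|), sq_nonneg x, hy'.le]
  calc ∫ x in a..b, 1 / (x ^ 4 + y ^ 2)
      ≤ ∫ x in a..b, 2 / |y| * (1 / (x ^ 2 + c ^ 2)) :=
        intervalIntegral.integral_mono_on hab
          ((continuous_const.div (by fun_prop) fun x => by positivity).intervalIntegrable _ _)
          (((continuous_const.div (by fun_prop) fun x => by positivity).const_mul
            _).intervalIntegrable _ _) fun x _ => hpt x
    _ ≤ 2 / |y| * (π / c) := by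
        rw [intervalIntegral.integral_const_mul]
        gcongr
        exact integral_one_div_sq_add_sq_le a b hc
    _ = 2 * π / |y| ^ ((3 : ℝ) / 2) := by rw [hpow]; field_simp

/-- `W(y) = ∫ dx/(Λ(y-x,x)² + Ω(y-x,x)²) ≤ C|y|^{-3/2}` on `[-1/2,1/2] \ {0}`. -/
theorem stmt_18 :
    ∃ C : ℝ, 0 < C ∧ ∀ y ∈ Set.Icc (-(1:ℝ)/2) (1/2), y ≠ 0 →
      (∫ x in (-(1:ℝ)/2)..(1/2), 1 / (Lam (y - x) x ^ 2 + Om (y - x) x ^ 2))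
        ≤ C / |y| ^ ((3:ℝ)/2) := by
  refine ⟨2 * π, by positivity, fun y hy hy0 => ?_⟩
  have hhalf : -(1 : ℝ) / 2 ≤ 1 / 2 := by norm_num
  have habs : ∀ t ∈ Set.Icc (-(1 : ℝ) / 2) (1 / 2), |t| ≤ 1 / 2 := fun t ht =>
    abs_le.2 ⟨by linarith [ht.1], ht.2⟩
  have hmajorant : IntegrableOn (fun x : ℝ => 1 / (x ^ 4 + y ^ 2)) (Set.Ioc (-1 / 2) (1 / 2)) :=
    ((continuous_const.div (by fun_prop) fun x => by positivity).intervalIntegrable _ _).1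
  calc (∫ x in (-(1:ℝ)/2)..(1/2), 1 / (Lam (y - x) x ^ 2 + Om (y - x) x ^ 2))
      ≤ ∫ x in (-(1:ℝ)/2)..(1/2), 1 / (x ^ 4 + y ^ 2) := by
        rw [intervalIntegral.integral_of_le hhalf, intervalIntegral.integral_of_le hhalf]
        refine setIntegral_mono_of_nonneg (fun x _ => by positivity) (fun x hx => ?_) hmajorant
        have hlower := pow_four_add_sq_le_Lam_sq_add_Om_sq (k := y - x)
          (habs x (Set.Ioc_subset_Icc_self hx)) (by simpa using habs y hy)
        rw [sub_add_cancel] at hlower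
        exact one_div_le_one_div_of_le (by positivity) hlower
    _ ≤ 2 * π / |y| ^ ((3:ℝ)/2) := integral_one_div_pow_four_add_sq_le hhalf hy0
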